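/- arXiv:1209.1040 — 5 statements merged into one kernel-verified Lean document; each statement's English description precedes it below -/
import Mathlib

section
/- Let P be a transitive p-subgroup of Sym(A) with |A| > 1. Then there exists a P-block system consisting of exactly p blocks, and the subgroup P' of P stabilizing all these blocks setwise has index p in P. -/
/-!
Fix a point `a`. Transitivity and `|A| > 1` make its stabilizer a proper subgroup of `P`, so it
lies in a maximal subgroup `M`; in a finite `p`-group maximal subgroups are normal of index `p`.
The orbit `B = M • a` is a block whose setwise stabilizer is `M`, so its translates correspond to
the `p` cosets of `M`, and since `M` is normal it stabilizes every translate `τ • B`, i.e. `M` is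
exactly the subgroup fixing the block system.
-/

open MulAction Pointwise

section PGroup

variable {p : ℕ} [Fact p.Prime] {G : Type*} [Group G] [Finite G]

theorem IsPGroup.card_eq_of_isSimpleOrder (hG : IsPGroup p G) [IsSimpleOrder (Subgroup G)] :
    Nat.card G = p := by
  have : Nontrivial G := Subgroup.nontrivial_iff.mp inferInstance
  obtain ⟨n, hn, hcard⟩ := hG.nontrivial_iff_card.mp this
  obtain ⟨g, hg⟩ := exists_prime_orderOf_dvd_card' p (hcard ▸ dvd_pow_self p hn.ne')
  have hg1 : g ≠ 1 := fun h => (Fact.out : p.Prime).one_lt.ne' (by rw [← hg, h, orderOf_one])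
  have htop : Subgroup.zpowers g = ⊤ :=
    (eq_bot_or_eq_top _).resolve_left (mt Subgroup.zpowers_eq_bot.mp hg1)
  rw [← hg, ← Nat.card_zpowers, htop, Subgroup.card_top]

theorem IsPGroup.normal_of_isCoatom (hG : IsPGroup p G) {M : Subgroup G} (hM : IsCoatom M) :
    M.Normal :=
  have : Group.IsNilpotent G := hG.isNilpotent
  Subgroup.NormalizerCondition.normal_of_coatom M Group.normalizerCondition_of_isNilpotent hM

theorem IsPGroup.index_eq_of_isCoatom (hG : IsPGroup p G) {M : Subgroup G} (hM : IsCoatom M) :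
    M.index = p := by
  have : M.Normal := hG.normal_of_isCoatom hM
  have : IsSimpleOrder (Set.Ici M) := Set.isSimpleOrder_Ici_iff_isCoatom.mpr hM
  have : IsSimpleOrder (Subgroup (G ⧸ M)) :=
    (QuotientGroup.comapMk'OrderIso M).isSimpleOrder (β := Set.Ici M)
  rw [Subgroup.index_eq_card, (hG.to_quotient M).card_eq_of_isSimpleOrder]

end PGroup

section Action

variable {G α : Type*} [Group G] [MulAction G α]

theorem MulAction.forall_mem_orbit_smul_eq_iff {b : α} [(stabilizer G b).Normal] {g : G} :
    (∀ c ∈ orbit G b, g • c = c) ↔ g ∈ stabilizer G b := by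
  refine ⟨fun h => h b (mem_orbit_self b), ?_⟩
  rintro hg _ ⟨h, rfl⟩
  show g ∈ stabilizer G (h • b)
  rwa [stabilizer_smul_eq_stabilizer_map_conj, MulEquiv.toMonoidHom_eq_coe,
    Subgroup.Normal.map_conj_eq]

theorem IsPGroup.exists_isBlock_normal_stabilizer_index_eq {p : ℕ} [Fact p.Prime]
    [Finite G] (hG : IsPGroup p G) [IsPretransitive G α] [Nontrivial α] :
    ∃ B : Set α, B.Nonempty ∧ IsBlock G B ∧ (stabilizer G B).Normal ∧
      (stabilizer G B).index = p := by
  obtain ⟨a⟩ : Nonempty α := inferInstance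
  have hne : stabilizer G a ≠ ⊤ := by
    obtain ⟨b, hb⟩ := exists_ne a
    obtain ⟨g, rfl⟩ := exists_smul_eq G a b
    exact fun h => hb (h ▸ Subgroup.mem_top g : g ∈ stabilizer G a)
  obtain ⟨M, hM, hle⟩ := (eq_top_or_exists_le_coatom _).resolve_left hne
  have hstab : stabilizer G (orbit M a) = M := stabilizer_orbit_eq hle
  refine ⟨orbit M a, ⟨a, mem_orbit_self a⟩, IsBlock.of_orbit hle, ?_, ?_⟩ <;> rw [hstab]
  exacts [hG.normal_of_isCoatom hM, hG.index_eq_of_isCoatom hM]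

end Action

theorem Equiv.Perm.mem_subgroup_orbit_set_iff {A : Type*} {P : Subgroup (Equiv.Perm A)}
    {B C : Set A} :
    C ∈ orbit P B ↔ ∃ σ ∈ P, C = σ '' B :=
  ⟨fun ⟨σ, h⟩ => ⟨σ, σ.2, h.symm⟩, fun ⟨σ, hσ, h⟩ => ⟨⟨σ, hσ⟩, h.symm⟩⟩

/-- Let `P` be a transitive `p`-subgroup of `Sym(A)` with `|A| > 1`.  Then there is a
`P`-block `B` whose `P`-block system `{σ(B) : σ ∈ P}` consists of exactly `p` blocks,
and the subgroup of `P` stabilizing all of the blocks (setwise) has index `p` in `P`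
(expressed as `|P| = p * |P'|`). -/
theorem transitive_pGroup_block_system {A : Type*} [Fintype A] (p : ℕ) (hp : p.Prime)
    (P : Subgroup (Equiv.Perm A)) (hP : IsPGroup p P)
    (htrans : ∀ x y : A, ∃ σ ∈ P, σ x = y) (hA : 1 < Fintype.card A) :
    ∃ B : Set A, B.Nonempty ∧
      (∀ σ ∈ P, σ '' B = B ∨ σ '' B ∩ B = ∅) ∧
      {C : Set A | ∃ σ ∈ P, C = σ '' B}.ncard = p ∧
      Nat.card P =
        p * Nat.card {σ : P // ∀ C : Set A,
          (∃ τ ∈ P, C = τ '' B) → (σ : Equiv.Perm A) '' C = C} := by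
  have : Fact p.Prime := ⟨hp⟩
  have : Nontrivial A := Fintype.one_lt_card_iff_nontrivial.mp hA
  have : IsPretransitive P A :=
    ⟨fun x y => let ⟨σ, hσ, h⟩ := htrans x y; ⟨⟨σ, hσ⟩, h⟩⟩
  obtain ⟨B, hBne, hB, hnormal, hindex⟩ := hP.exists_isBlock_normal_stabilizer_index_eq (α := A)
  have horbit : {C : Set A | ∃ σ ∈ P, C = σ '' B} = orbit P B :=
    Set.ext fun _ => Equiv.Perm.mem_subgroup_orbit_set_iff.symm
  refine ⟨B, hBne, fun σ hσ => ?_, ?_, ?_⟩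
  · exact (isBlock_iff_smul_eq_or_disjoint.mp hB ⟨σ, hσ⟩).imp_right
      Set.disjoint_iff_inter_eq_empty.mp
  · rw [horbit, ← index_stabilizer, hindex]
  · rw [← hindex, ← (stabilizer P B).index_mul_card]
    simp only [← Equiv.Perm.mem_subgroup_orbit_set_iff]
    exact congrArg _ (Nat.card_congr (Equiv.subtypeEquivRight fun _ =>
      forall_mem_orbit_smul_eq_iff).symm)
end

section
/- If P is a transitive 2-subgroup of Sym(A) with |A| > 1, then A can be partitioned as A = B₁ ∪ B₂ where B₁ and B₂ are disjoint P-blocks interchanged or fixed by each element of P, and the stabilizer of B₁ in P has index 2. -/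
/-!
The stabilizer `P_a` of a point is a proper subgroup of the `2`-group `P`, so it lies in a
subgroup `M` of index `2`. The orbit `B = M • a` is a block whose setwise stabilizer is `M`.
A point `h • a` lies in `B` exactly when `h ∈ M`; as `M` has index two, every element outside
`M` therefore carries `B` onto its complement.
-/

open MulAction Pointwise

theorem IsPGroup.exists_index_eq_prime_le {p : ℕ} [Fact p.Prime] {G : Type*} [Group G] [Finite G]
    (hG : IsPGroup p G) {H : Subgroup G} (hH : H ≠ ⊤) :
    ∃ M : Subgroup G, M.index = p ∧ H ≤ M := by
  obtain ⟨k, hk⟩ := hG.exists_card_eq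
  obtain ⟨n, hn⟩ := (hG.to_subgroup H).exists_card_eq
  have hnk : n < k := by
    by_contra! hkn
    refine hH (Subgroup.eq_top_of_card_eq H (le_antisymm H.card_le_card_group ?_))
    rw [hk, hn]
    exact Nat.pow_le_pow_right (Fact.out : p.Prime).pos hkn
  obtain ⟨M, hMcard, hHM⟩ := Sylow.exists_subgroup_card_pow_prime_le p
    (hk ▸ pow_dvd_pow p (Nat.sub_le k 1)) H hn (Nat.le_sub_one_of_lt hnk)
  refine ⟨M, Nat.eq_of_mul_eq_mul_left (pow_pos (Fact.out : p.Prime).pos (k - 1)) ?_, hHM⟩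
  rw [← hMcard, Subgroup.card_mul_index, hk, hMcard, pow_sub_one_mul (by omega)]

namespace MulAction

variable {G X : Type*} [Group G] [MulAction G X]

theorem stabilizer_ne_top [IsPretransitive G X] [Nontrivial X] (a : X) :
    stabilizer G a ≠ ⊤ := by
  obtain ⟨b, hba⟩ := exists_ne a
  obtain ⟨g, rfl⟩ := exists_smul_eq G a b
  exact fun h => hba (mem_stabilizer_iff.mp (h ▸ Subgroup.mem_top g))

variable {a : X} {M : Subgroup G}

theorem smul_mem_orbit_iff_mem (ha : stabilizer G a ≤ M) {g : G} :
    g • a ∈ orbit M a ↔ g ∈ M := by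
  refine ⟨fun hg => ?_, fun hg => mem_orbit a (⟨g, hg⟩ : M)⟩
  rw [← stabilizer_orbit_eq ha]
  exact (IsBlock.of_orbit ha).smul_eq_of_mem (mem_orbit_self a) hg

theorem smul_orbit_eq_self_iff (ha : stabilizer G a ≤ M) {g : G} :
    g • orbit M a = orbit M a ↔ g ∈ M := by
  rw [← mem_stabilizer_iff, stabilizer_orbit_eq ha]

theorem smul_orbit_eq_compl [IsPretransitive G X] (hM : M.index = 2) (ha : stabilizer G a ≤ M)
    {g : G} (hg : g ∉ M) : g • orbit M a = (orbit M a)ᶜ := by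
  ext x
  obtain ⟨h, rfl⟩ := exists_smul_eq G a x
  rw [Set.mem_smul_set_iff_inv_smul_mem, smul_smul, Set.mem_compl_iff,
    smul_mem_orbit_iff_mem ha, smul_mem_orbit_iff_mem ha, Subgroup.mul_mem_iff_of_index_two hM,
    inv_mem_iff, iff_false_intro hg, false_iff]

theorem smul_orbit_eq_or_eq_compl [IsPretransitive G X] (hM : M.index = 2)
    (ha : stabilizer G a ≤ M) (g : G) :
    (g • orbit M a = orbit M a ∧ g • (orbit M a)ᶜ = (orbit M a)ᶜ) ∨
      (g • orbit M a = (orbit M a)ᶜ ∧ g • (orbit M a)ᶜ = orbit M a) := by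
  rw [Set.smul_set_compl]
  by_cases hg : g ∈ M
  · have hfix := (smul_orbit_eq_self_iff ha).mpr hg
    exact .inl ⟨hfix, by rw [hfix]⟩
  · have hswap := smul_orbit_eq_compl hM ha hg
    exact .inr ⟨hswap, by rw [hswap, compl_compl]⟩

end MulAction

/-- If `P` is a transitive `2`-subgroup of `Sym(A)` with `|A| > 1`, then `A` can be
partitioned as `A = B₁ ∪ B₂` where `B₁, B₂` are disjoint nonempty `P`-blocks which are
interchanged or fixed by each element of `P`, and the stabilizer of `B₁` in `P` has
index `2` (expressed as `|P| = 2 * |stabilizer|`). -/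
theorem transitive_twoGroup_two_blocks {A : Type*} [Fintype A]
    (P : Subgroup (Equiv.Perm A)) (hP : IsPGroup 2 P)
    (htrans : ∀ x y : A, ∃ σ ∈ P, σ x = y) (hA : 1 < Fintype.card A) :
    ∃ B₁ B₂ : Set A, B₁.Nonempty ∧ B₂.Nonempty ∧
      B₁ ∪ B₂ = Set.univ ∧ Disjoint B₁ B₂ ∧
      (∀ σ ∈ P, (σ '' B₁ = B₁ ∧ σ '' B₂ = B₂) ∨ (σ '' B₁ = B₂ ∧ σ '' B₂ = B₁)) ∧
      Nat.card P = 2 * Nat.card {σ : P // (σ : Equiv.Perm A) '' B₁ = B₁} := by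
  have : IsPretransitive P A :=
    ⟨fun x y => let ⟨σ, hσ, hσxy⟩ := htrans x y; ⟨⟨σ, hσ⟩, hσxy⟩⟩
  have : Nontrivial A := Fintype.one_lt_card_iff_nontrivial.mp hA
  have : Fact (Nat.Prime 2) := ⟨Nat.prime_two⟩
  obtain ⟨a⟩ : Nonempty A := inferInstance
  obtain ⟨M, hM, ha⟩ := hP.exists_index_eq_prime_le (stabilizer_ne_top (G := P) a)
  obtain ⟨g, hg, -⟩ := Subgroup.index_eq_two_iff_exists_notMem_and.mp hM
  have hB : (orbit M a).Nonempty := Set.nonempty_of_mem (mem_orbit_self a)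
  -- `σ '' B` is definitionally `(⟨σ, hσ⟩ : P) • B`, so the pointwise lemmas apply as stated.
  refine ⟨orbit M a, (orbit M a)ᶜ, hB, ?_, Set.union_compl_self _,
    disjoint_compl_right, fun σ hσ => smul_orbit_eq_or_eq_compl hM ha ⟨σ, hσ⟩, ?_⟩
  · exact smul_orbit_eq_compl hM ha hg ▸ hB.smul_set
  · have hstab : {σ : P // (σ : Equiv.Perm A) '' orbit M a = orbit M a} ≃ M :=
      Equiv.subtypeEquivRight fun σ => smul_orbit_eq_self_iff ha
    rw [← M.index_mul_card, hM, Nat.card_congr hstab]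
end

section
/- Let G be a 2-group with smooth generating sequence (g₁, ..., g_k), and H ≤ G a subgroup of index 2. Let j = min{i : g_i ∉ H}, τ = g_j, and define β_i = g_i if g_i ∈ H and β_i = τ⁻¹ g_i otherwise. Then (β₁, ..., β_k) is a smooth generating sequence for H. -/
open scoped Classical

/-!
Write `K_i` and `L_i` for the subgroups generated by the first `i` terms of `g` and of `β`.
By induction, `L_i = K_i ⊓ H`. Since `[K_{i+1} : K_i] ≤ 2`, every element of `K_{i+1}` lies in
`K_i` or in `g_i K_i`, and `K_{i+1}` is also generated by `K_i` and `τ⁻¹ g_i` once `τ ∈ K_i`;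
so the new generator `β_i ∈ H` accounts for all of `K_{i+1} ⊓ H`. At the step `i = j` itself
`β_j = 1`, and `K_j ≤ H` is the whole of `K_{j+1} ⊓ H`, a proper subgroup of `K_{j+1}`.
Finally intersecting with `H` does not increase relative indices.
-/

namespace Subgroup

variable {G : Type*} [Group G]

theorem relIndex_inf_inf_le {A B : Subgroup G} (H : Subgroup G) (h : A.relIndex B ≠ 0) :
    (A ⊓ H).relIndex (B ⊓ H) ≤ A.relIndex B := by
  have hinf : A ⊓ H ⊓ (B ⊓ H) = A ⊓ (B ⊓ H) := by
    rw [inf_inf_inf_comm, inf_idem, inf_assoc]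
  calc (A ⊓ H).relIndex (B ⊓ H)
      = A.relIndex (B ⊓ H) := by rw [← inf_relIndex_right, hinf, inf_relIndex_right]
    _ ≤ A.relIndex B := relIndex_le_of_le_right inf_le_left h

theorem sup_closure_singleton_mul_left {K : Subgroup G} {a : G} (ha : a ∈ K) (x : G) :
    K ⊔ closure {a * x} = K ⊔ closure {x} := by
  have key : ∀ {b : G}, b ∈ K → ∀ y, K ⊔ closure {b * y} ≤ K ⊔ closure {y} := fun hb y =>
    sup_le le_sup_left <| (closure_le _).2 <| Set.singleton_subset_iff.2 <|
      mul_mem (mem_sup_left hb) (mem_sup_right (subset_closure rfl))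
  refine le_antisymm (key ha x) ?_
  simpa using key (inv_mem ha) (a * x)

variable [Finite G]

theorem mem_or_inv_mul_mem_of_relIndex_le_two {K : Subgroup G} {y z : G}
    (hK : K.relIndex (K ⊔ closure {y}) ≤ 2) (hz : z ∈ K ⊔ closure {y}) :
    z ∈ K ∨ y⁻¹ * z ∈ K := by
  by_cases hzK : z ∈ K
  · exact Or.inl hzK
  right
  have hy : y ∈ K ⊔ closure {y} := mem_sup_right (subset_closure rfl)
  have hyK : y ∉ K := fun hyK => hzK <| by
    rwa [sup_eq_left.2 ((closure_le _).2 (Set.singleton_subset_iff.2 hyK))] at hz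
  have hK₂ : K.relIndex (K ⊔ closure {y}) = 2 := by
    have h₀ : K.relIndex (K ⊔ closure {y}) ≠ 0 := index_ne_zero_of_finite
    have h₁ : K.relIndex (K ⊔ closure {y}) ≠ 1 := fun h => hzK (relIndex_eq_one.1 h hz)
    omega
  have := (mul_mem_iff_of_index_two hK₂ (a := (⟨y, hy⟩ : ↥(K ⊔ closure {y}))⁻¹)
    (b := ⟨z, hz⟩)).2 (by simp [mem_subgroupOf, hyK, hzK])
  simpa [mem_subgroupOf] using this

theorem inf_sup_closure_singleton_eq {K H : Subgroup G} {b : G} (hb : b ∈ H)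
    (hK : K.relIndex (K ⊔ closure {b}) ≤ 2) :
    K ⊓ H ⊔ closure {b} = (K ⊔ closure {b}) ⊓ H := by
  have hbK : b ∈ K ⊓ H ⊔ closure {b} := mem_sup_right (subset_closure rfl)
  refine le_antisymm (sup_le (inf_le_inf_right H le_sup_left) ?_) ?_
  · exact (closure_le _).2 (Set.singleton_subset_iff.2 ⟨mem_sup_right (subset_closure rfl), hb⟩)
  rintro z ⟨hz, hzH⟩
  rcases mem_or_inv_mul_mem_of_relIndex_le_two hK hz with hzK | hzK
  · exact mem_sup_left ⟨hzK, hzH⟩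
  · rw [← mul_inv_cancel_left b z]
    exact mul_mem hbK (mem_sup_left (mem_inf.2 ⟨hzK, mul_mem (inv_mem hb) hzH⟩))

theorem sup_closure_singleton_inf_eq_of_notMem {K H : Subgroup G} {x : G} (hKH : K ≤ H)
    (hx : x ∉ H) (hK : K.relIndex (K ⊔ closure {x}) ≤ 2) :
    (K ⊔ closure {x}) ⊓ H = K := by
  refine le_antisymm (fun z ⟨hz, hzH⟩ => ?_) (le_inf le_sup_left hKH)
  refine (mem_or_inv_mul_mem_of_relIndex_le_two hK hz).resolve_right fun h => hx ?_
  exact inv_mem_iff.1 ((H.mul_mem_cancel_right hzH).1 (hKH h))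

end Subgroup

open Subgroup

section PrefixClosure

variable {G : Type*} [Group G] {k : ℕ}

def prefixClosure (f : Fin k → G) (i : ℕ) : Subgroup G :=
  closure {x : G | ∃ j : Fin k, (j : ℕ) < i ∧ x = f j}

theorem mem_prefixClosure (f : Fin k → G) {i : ℕ} {j : Fin k} (hj : (j : ℕ) < i) :
    f j ∈ prefixClosure f i :=
  subset_closure ⟨j, hj, rfl⟩

theorem prefixClosure_zero (f : Fin k → G) : prefixClosure f 0 = ⊥ := by
  simp only [prefixClosure, Nat.not_lt_zero, false_and, exists_false, Set.ofPred_false,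
    Subgroup.closure_empty]

theorem prefixClosure_length (f : Fin k → G) : prefixClosure f k = closure (Set.range f) := by
  unfold prefixClosure
  congr 1
  ext x
  exact ⟨fun ⟨j, _, hx⟩ => ⟨j, hx.symm⟩, fun ⟨j, hx⟩ => ⟨j, j.is_lt, hx.symm⟩⟩

theorem prefixClosure_succ (f : Fin k → G) {i : ℕ} (hi : i < k) :
    prefixClosure f (i + 1) = prefixClosure f i ⊔ closure {f ⟨i, hi⟩} := by
  have hset : {x : G | ∃ j : Fin k, (j : ℕ) < i + 1 ∧ x = f j}
      = {x : G | ∃ j : Fin k, (j : ℕ) < i ∧ x = f j} ∪ {f ⟨i, hi⟩} := by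
    ext x
    simp only [Set.mem_union, Set.mem_singleton_iff, Nat.lt_succ_iff_lt_or_eq,
      or_and_right, exists_or]
    refine or_congr Iff.rfl ⟨?_, ?_⟩
    · rintro ⟨j, hj, rfl⟩
      exact congrArg f (Fin.ext hj)
    · rintro rfl
      exact ⟨⟨i, hi⟩, rfl, rfl⟩
  rw [prefixClosure, hset, Subgroup.closure_union]
  rfl

theorem prefixClosure_le_of_forall_mem {f : Fin k → G} {H : Subgroup G} {i : ℕ}
    (h : ∀ j : Fin k, (j : ℕ) < i → f j ∈ H) : prefixClosure f i ≤ H :=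
  (closure_le _).2 fun _ ⟨j, hj, hx⟩ => hx ▸ h j hj

end PrefixClosure

theorem prefixClosure_eq_prefixClosure_inf {G : Type*} [Group G] [Finite G] {k : ℕ}
    {g : Fin k → G} (hsmooth : ∀ i : ℕ, i < k →
      (prefixClosure g i).relIndex (prefixClosure g (i + 1)) ≤ 2)
    {H : Subgroup G} (hH : H.index = 2)
    {j : Fin k} (hj : g j ∉ H) (hjmin : ∀ i : Fin k, g i ∉ H → j ≤ i)
    {β : Fin k → G} (hβ : ∀ i : Fin k, β i = if g i ∈ H then g i else (g j)⁻¹ * g i) :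
    ∀ i : ℕ, i ≤ k → prefixClosure β i = prefixClosure g i ⊓ H := by
  intro i
  induction i with
  | zero => exact fun _ => by rw [prefixClosure_zero, prefixClosure_zero, bot_inf_eq]
  | succ n ih =>
    intro hn
    have hrel := hsmooth n hn
    rw [prefixClosure_succ g hn] at hrel ⊢
    rw [prefixClosure_succ β hn, ih (Nat.le_of_succ_le hn), hβ]
    by_cases hx : g ⟨n, hn⟩ ∈ H
    · rw [if_pos hx]
      exact inf_sup_closure_singleton_eq hx hrel
    rw [if_neg hx]
    rcases (hjmin _ hx).lt_or_eq with hjn | hjn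
    · have hτ := inv_mem (mem_prefixClosure g hjn)
      have hβH : (g j)⁻¹ * g ⟨n, hn⟩ ∈ H := by
        rw [mul_mem_iff_of_index_two hH, inv_mem_iff]
        exact iff_of_false hj hx
      rw [← sup_closure_singleton_mul_left hτ] at hrel ⊢
      exact inf_sup_closure_singleton_eq hβH hrel
    · subst hjn
      have hKH : prefixClosure g n ≤ H := prefixClosure_le_of_forall_mem fun i hi =>
        by_contra fun hiH => absurd (hjmin i hiH) (not_le.2 hi)
      rw [inv_mul_cancel, closure_singleton_one, sup_bot_eq, inf_of_le_left hKH,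
        sup_closure_singleton_inf_eq_of_notMem hKH hx hrel]

theorem sgs_of_index_two_subgroup_general {G : Type*} [Group G] [Fintype G]
    (k : ℕ) (g : Fin k → G)
    (hgen : Subgroup.closure (Set.range g) = ⊤)
    (hsmooth : ∀ i : ℕ, i < k →
      (Subgroup.closure {x : G | ∃ j : Fin k, (j : ℕ) < i ∧ x = g j}).relIndex
        (Subgroup.closure {x : G | ∃ j : Fin k, (j : ℕ) < i + 1 ∧ x = g j}) ≤ 2)
    (H : Subgroup G) (hH : H.index = 2)
    (j : Fin k) (hj : g j ∉ H) (hjmin : ∀ i : Fin k, g i ∉ H → j ≤ i)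
    (β : Fin k → G) (hβ : ∀ i : Fin k, β i = if g i ∈ H then g i else (g j)⁻¹ * g i) :
    Subgroup.closure (Set.range β) = H ∧
      ∀ i : ℕ, i < k →
        (Subgroup.closure {x : G | ∃ j' : Fin k, (j' : ℕ) < i ∧ x = β j'}).relIndex
          (Subgroup.closure {x : G | ∃ j' : Fin k, (j' : ℕ) < i + 1 ∧ x = β j'}) ≤ 2 := by
  have key := prefixClosure_eq_prefixClosure_inf hsmooth hH hj hjmin hβ
  refine ⟨?_, fun i hi => ?_⟩
  · rw [← prefixClosure_length, key k le_rfl, prefixClosure_length, hgen, top_inf_eq]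
  · change (prefixClosure β i).relIndex (prefixClosure β (i + 1)) ≤ 2
    rw [key i hi.le, key (i + 1) hi]
    exact (relIndex_inf_inf_le H index_ne_zero_of_finite).trans (hsmooth i hi)

/-- Let `G` be a `2`-group with smooth generating sequence `(g₁, ..., g_k)` (each
partial closure has index at most `2` in the next, and the whole sequence generates
`G`), and `H ≤ G` a subgroup of index `2`.  Let `j` be minimal with `g_j ∉ H`,
`τ = g_j`, and `β_i = g_i` if `g_i ∈ H`, `β_i = τ⁻¹ * g_i` otherwise.  Then
`(β₁, ..., β_k)` is a smooth generating sequence for `H`. -/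
theorem sgs_of_index_two_subgroup {G : Type*} [Group G] [Fintype G]
    (hG : IsPGroup 2 G) (k : ℕ) (g : Fin k → G)
    (hgen : Subgroup.closure (Set.range g) = ⊤)
    (hsmooth : ∀ i : ℕ, i < k →
      (Subgroup.closure {x : G | ∃ j : Fin k, (j : ℕ) < i ∧ x = g j}).relIndex
        (Subgroup.closure {x : G | ∃ j : Fin k, (j : ℕ) < i + 1 ∧ x = g j}) ≤ 2)
    (H : Subgroup G) (hH : H.index = 2)
    (j : Fin k) (hj : g j ∉ H) (hjmin : ∀ i : Fin k, g i ∉ H → j ≤ i)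
    (β : Fin k → G) (hβ : ∀ i : Fin k, β i = if g i ∈ H then g i else (g j)⁻¹ * g i) :
    Subgroup.closure (Set.range β) = H ∧
      ∀ i : ℕ, i < k →
        (Subgroup.closure {x : G | ∃ j' : Fin k, (j' : ℕ) < i ∧ x = β j'}).relIndex
          (Subgroup.closure {x : G | ∃ j' : Fin k, (j' : ℕ) < i + 1 ∧ x = β j'}) ≤ 2 :=
  sgs_of_index_two_subgroup_general k g hgen hsmooth H hH j hj hjmin β hβ
end

section
/- Let G ≤ Sym(A) act transitively on A, fix a ∈ A and b ≠ a, and let X be the graph with vertex set A whose edge set is the G-orbit of the unordered pair {a,b}. Then the connected component of a in X is the smallest G-block containing {a,b}. -/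
/-- Let `G ≤ Sym(A)` act transitively on `A`, fix `a ≠ b` in `A`, and let `X` be the
graph on `A` whose edges are the `G`-orbit of the unordered pair `{a, b}`.  Then the
connected component of `a` in `X` is the smallest `G`-block containing `{a, b}`: it
is a `G`-block containing `a` and `b`, and is contained in every `G`-block containing
both `a` and `b`. -/
theorem component_is_smallest_block {A : Type*} [Fintype A]
    (G : Subgroup (Equiv.Perm A)) (htrans : ∀ x y : A, ∃ σ ∈ G, σ x = y)
    (a b : A) (hab : a ≠ b) (X : SimpleGraph A)
    (hX : ∀ x y : A, X.Adj x y ↔ ∃ σ ∈ G, ({σ a, σ b} : Set A) = {x, y}) :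
    a ∈ {x : A | X.Reachable a x} ∧ b ∈ {x : A | X.Reachable a x} ∧
      (∀ σ ∈ G, σ '' {x : A | X.Reachable a x} = {x : A | X.Reachable a x} ∨
        σ '' {x : A | X.Reachable a x} ∩ {x : A | X.Reachable a x} = ∅) ∧
      ∀ D : Set A, D.Nonempty → (∀ σ ∈ G, σ '' D = D ∨ σ '' D ∩ D = ∅) →
        a ∈ D → b ∈ D → {x : A | X.Reachable a x} ⊆ D := by
  have hadjab : X.Adj a b := by
    rw [hX]; exact ⟨1, one_mem G, rfl⟩
  have hadj : ∀ σ ∈ G, ∀ x y, X.Adj x y → X.Adj (σ x) (σ y) := by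
    intro σ hσ x y hxy
    rw [hX] at hxy ⊢
    obtain ⟨τ, hτ, hτ2⟩ := hxy
    refine ⟨σ * τ, mul_mem hσ hτ, ?_⟩
    have h1 : ({(σ * τ) a, (σ * τ) b} : Set A) = σ '' {τ a, τ b} := by
      simp [Set.image_insert_eq, Equiv.Perm.mul_apply]
    rw [h1, hτ2]
    simp [Set.image_insert_eq]
  have hreach : ∀ σ ∈ G, ∀ x y, X.Reachable x y → X.Reachable (σ x) (σ y) := by
    intro σ hσ x y h
    exact h.map (⟨σ, fun h' => hadj σ hσ _ _ h'⟩ : X →g X)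
  refine ⟨SimpleGraph.Reachable.refl a, hadjab.reachable, ?_, ?_⟩
  · intro σ hσ
    by_cases hne : (σ '' {x : A | X.Reachable a x} ∩ {x : A | X.Reachable a x}).Nonempty
    · left
      obtain ⟨z, ⟨w, hw, hwz⟩, hz⟩ := hne
      have hσa : X.Reachable a (σ a) := by
        have := hreach σ hσ a w hw
        rw [hwz] at this
        exact hz.trans this.symm
      ext x
      constructor
      · rintro ⟨w, hw, rfl⟩
        exact hσa.trans (hreach σ hσ a w hw)
      · intro hx
        refine ⟨σ⁻¹ x, ?_, by simp⟩
        have h1 : X.Reachable (σ⁻¹ a) a := by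
          have := hreach σ⁻¹ (inv_mem hσ) a (σ a) hσa
          simpa using this
        have h2 : X.Reachable (σ⁻¹ a) (σ⁻¹ x) := hreach σ⁻¹ (inv_mem hσ) a x hx
        exact (h1.symm).trans h2
    · right
      exact Set.not_nonempty_iff_eq_empty.mp hne
  · intro D hDne hDblock haD hbD x hx
    have key : ∀ v w : A, X.Adj v w → v ∈ D → w ∈ D := by
      intro v w hvw hvD
      rw [hX] at hvw
      obtain ⟨σ, hσ, hσ2⟩ := hvw
      rcases Set.pair_eq_pair_iff.mp hσ2 with ⟨h1, h2⟩ | ⟨h1, h2⟩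
      · rcases hDblock σ hσ with heq | hdisj
        · rw [← heq]; exact ⟨b, hbD, h2⟩
        · exfalso
          exact Set.eq_empty_iff_forall_notMem.mp hdisj v ⟨⟨a, haD, h1⟩, hvD⟩
      · rcases hDblock σ hσ with heq | hdisj
        · rw [← heq]; exact ⟨a, haD, h1⟩
        · exfalso
          exact Set.eq_empty_iff_forall_notMem.mp hdisj v ⟨⟨b, hbD, h2⟩, hvD⟩
    obtain ⟨p⟩ := hx
    have walkD : ∀ (v w : A), X.Walk v w → v ∈ D → w ∈ D := by
      intro v w p
      induction p with
      | nil => exact id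
      | cons h p ih => exact fun hv => ih (key _ _ h hv)
    exact walkD a x p haD
end

section
/- The kernel of the restriction homomorphism π_r : Aut_e(X_{r+1}) → Aut_e(X_r) is generated by the transpositions (u v) where u, v range over pairs of twin vertices in V_{r+1}; in particular this kernel is an elementary abelian 2-group. -/
/-- `layerV X a b r` is the vertex set `V(X_{r+1})` of the subgraph `X_{r+1}` of `X`
consisting of all vertices appearing on paths of length `≤ r+1` through the
distinguished edge `e = (a, b)`:  `V(X_1) = {a, b}` and `V(X_{r+1})` consists of
`V(X_r)` together with the neighbors of vertices of `V(X_r)`. -/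
def layerV {V : Type*} (X : SimpleGraph V) (a b : V) : ℕ → Set V
  | 0 => {a, b}
  | r + 1 => layerV X a b r ∪ {v : V | ∃ u ∈ layerV X a b r, X.Adj u v}

/-- `layerAdj X a b r` is the adjacency relation of the subgraph `X_{r+1}`:
`E(X_1) = {(a, b)}` and `E(X_{r+1})` consists of those edges of `X` with an endpoint
in `V(X_r)`. -/
def layerAdj {V : Type*} (X : SimpleGraph V) (a b : V) : ℕ → V → V → Prop
  | 0 => fun x y => (x = a ∧ y = b) ∨ (x = b ∧ y = a)
  | r + 1 => fun x y => X.Adj x y ∧ (x ∈ layerV X a b r ∨ y ∈ layerV X a b r)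

/-- `autE X a b r` represents `Aut_e(X_{r+1})`: the automorphisms of the subgraph
`X_{r+1}` fixing the distinguished edge `e = (a, b)` as a set, viewed as permutations
of `V` which are the identity outside `V(X_{r+1})`. -/
def autE {V : Type*} (X : SimpleGraph V) (a b : V) (r : ℕ) : Set (Equiv.Perm V) :=
  {σ : Equiv.Perm V |
    (∀ v : V, v ∉ layerV X a b r → σ v = v) ∧
    (∀ x y : V, layerAdj X a b r x y ↔ layerAdj X a b r (σ x) (σ y)) ∧
    ({σ a, σ b} : Set V) = {a, b}}

/-- The kernel of the restriction homomorphism `π_r : Aut_e(X_{r+1}) → Aut_e(X_r)`: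
those automorphisms of `X_{r+1}` (fixing `e`) which restrict to the identity on
`X_r`. -/
def kerPi {V : Type*} (X : SimpleGraph V) (a b : V) (r : ℕ) : Set (Equiv.Perm V) :=
  {σ : Equiv.Perm V | σ ∈ autE X a b r ∧ ∀ v ∈ layerV X a b (r - 1), σ v = v}

/-- The set of transpositions `(u v)` where `u, v` range over pairs of twin vertices
of `V_{r+1} = V(X_{r+1}) \ V(X_r)`, i.e. `u ≠ v` with equal neighbor sets
`f(u) = f(v)` in `V(X_r)`. -/
def twinTranspositions {V : Type*} [DecidableEq V] (X : SimpleGraph V) (a b : V)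
    (r : ℕ) : Set (Equiv.Perm V) :=
  {π : Equiv.Perm V | ∃ u v : V,
    u ∈ layerV X a b r ∧ u ∉ layerV X a b (r - 1) ∧
    v ∈ layerV X a b r ∧ v ∉ layerV X a b (r - 1) ∧ u ≠ v ∧
    {w ∈ layerV X a b (r - 1) | X.Adj u w} = {w ∈ layerV X a b (r - 1) | X.Adj v w} ∧
    π = Equiv.swap u v}

/-! An element `σ` of the kernel fixes `V(X_r)` pointwise and preserves adjacency to it, so it
permutes `V_{r+1}` preserving `f`. If some orbit of `σ` on `V_{r+1}` had three points, they would
be three common neighbours of some `w ∈ V(X_r)`, which also has a neighbour in `V(X_r)`: that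
is degree four. Hence `σ` is an involution, its `2`-cycles are twin transpositions, and a group
in which every element squares to `1` is abelian. -/

open Equiv Equiv.Perm

lemma Equiv.Perm.apply_mem_iff_of_forall_mem_apply_eq {α : Type*} {σ : Perm α} {s : Set α}
    (h : ∀ x ∈ s, σ x = x) {x : α} : σ x ∈ s ↔ x ∈ s := by
  refine ⟨fun hx => ?_, fun hx => (h x hx).symm ▸ hx⟩
  rwa [← σ.injective (h _ hx)]

section

variable {V : Type*} {X : SimpleGraph V} {a b : V} {σ : Perm V} {k : ℕ}

lemma layerV_mono : Monotone (layerV X a b) :=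
  monotone_nat_of_le_succ fun _ => Set.subset_union_left

lemma left_mem_layerV (k : ℕ) : a ∈ layerV X a b k :=
  layerV_mono (Nat.zero_le k) (Or.inl rfl)

lemma right_mem_layerV (k : ℕ) : b ∈ layerV X a b k :=
  layerV_mono (Nat.zero_le k) (Or.inr rfl)

lemma exists_adj_mem_layerV (hab : X.Adj a b) {w : V} (hw : w ∈ layerV X a b k) :
    ∃ w' ∈ layerV X a b k, X.Adj w w' := by
  induction k with
  | zero =>
    rcases hw with rfl | rfl
    exacts [⟨b, Or.inr rfl, hab⟩, ⟨a, Or.inl rfl, hab.symm⟩]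
  | succ k ih =>
    rcases hw with hw | ⟨u, hu, hadj⟩
    · obtain ⟨w', hw', hadj⟩ := ih hw
      exact ⟨w', Or.inl hw', hadj⟩
    · exact ⟨u, Or.inl hu, hadj.symm⟩

lemma exists_adj_of_mem_layerV_succ {u : V} (hu : u ∈ layerV X a b (k + 1))
    (hu' : u ∉ layerV X a b k) : ∃ w ∈ layerV X a b k, X.Adj u w := by
  rcases hu with hu | ⟨w, hw, hadj⟩
  · exact absurd hu hu'
  · exact ⟨w, hw, hadj.symm⟩

lemma mem_kerPi_succ_iff :
    σ ∈ kerPi X a b (k + 1) ↔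
      (∀ v ∉ layerV X a b (k + 1), σ v = v) ∧ (∀ v ∈ layerV X a b k, σ v = v) ∧
        ∀ u, ∀ w ∈ layerV X a b k, (X.Adj (σ u) w ↔ X.Adj u w) := by
  constructor
  · rintro ⟨⟨hout, hadj, -⟩, hold⟩
    refine ⟨hout, hold, fun u w hw => ?_⟩
    have := hadj u w
    simp only [layerAdj, hold w hw, hw, or_true, and_true] at this
    exact this.symm
  · rintro ⟨hout, hold, hadj⟩
    refine ⟨⟨hout, fun x y => ?_, ?_⟩, hold⟩
    · simp only [layerAdj, apply_mem_iff_of_forall_mem_apply_eq hold]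
      by_cases hx : x ∈ layerV X a b k
      · simp only [hold x hx, hx, true_or, and_true, X.adj_comm x, hadj y x hx]
      by_cases hy : y ∈ layerV X a b k
      · simp only [hold y hy, hy, or_true, and_true, hadj x y hy]
      · simp only [hx, hy, or_self, and_false]
    · rw [hold a (left_mem_layerV k), hold b (right_mem_layerV k)]

lemma adj_apply_iff_of_mem_kerPi (hσ : σ ∈ kerPi X a b (k + 1)) (u : V) {w : V}
    (hw : w ∈ layerV X a b k) : X.Adj (σ u) w ↔ X.Adj u w :=
  (mem_kerPi_succ_iff.1 hσ).2.2 u w hw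

lemma apply_mem_layerV_iff_of_mem_kerPi (hσ : σ ∈ kerPi X a b (k + 1)) {v : V} :
    σ v ∈ layerV X a b k ↔ v ∈ layerV X a b k :=
  apply_mem_iff_of_forall_mem_apply_eq (mem_kerPi_succ_iff.1 hσ).2.1

lemma mem_layerV_of_apply_ne (hσ : σ ∈ kerPi X a b (k + 1)) {u : V} (hu : σ u ≠ u) :
    u ∈ layerV X a b (k + 1) ∧ u ∉ layerV X a b k := by
  obtain ⟨hout, hold, -⟩ := mem_kerPi_succ_iff.1 hσ
  exact ⟨not_imp_comm.1 (hout u) hu, fun h => hu (hold u h)⟩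

variable (X a b) in
def kerPiSubgroup (r : ℕ) : Subgroup (Perm V) where
  carrier := kerPi X a b r
  one_mem' := ⟨⟨fun _ _ => rfl, fun _ _ => Iff.rfl, rfl⟩, fun _ _ => rfl⟩
  mul_mem' := by
    rintro σ τ ⟨⟨hσout, hσadj, -⟩, hσold⟩ ⟨⟨hτout, hτadj, -⟩, hτold⟩
    have hfix : ∀ v ∈ layerV X a b (r - 1), (σ * τ) v = v := fun v hv => by
      simp only [Perm.mul_apply, hτold v hv, hσold v hv]
    refine ⟨⟨fun v hv => ?_, fun x y => (hτadj x y).trans (hσadj _ _), ?_⟩, hfix⟩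
    · simp only [Perm.mul_apply, hτout v hv, hσout v hv]
    · rw [hfix a (left_mem_layerV _), hfix b (right_mem_layerV _)]
  inv_mem' := by
    rintro σ ⟨⟨hout, hadj, -⟩, hold⟩
    have hfix : ∀ v ∈ layerV X a b (r - 1), σ⁻¹ v = v := fun v hv =>
      Perm.inv_eq_iff_eq.2 (hold v hv).symm
    refine ⟨⟨fun v hv => Perm.inv_eq_iff_eq.2 (hout v hv).symm, fun x y => ?_, ?_⟩, hfix⟩
    · simpa only [Perm.inv_def, Equiv.apply_symm_apply] using (hadj (σ⁻¹ x) (σ⁻¹ y)).symm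
    · rw [hfix a (left_mem_layerV _), hfix b (right_mem_layerV _)]

lemma kerPi_zero : kerPi X a b 0 = {1} := by
  refine Set.eq_singleton_iff_unique_mem.2 ⟨(kerPiSubgroup X a b 0).one_mem,
    fun σ ⟨⟨hout, _⟩, hold⟩ => Equiv.ext fun v => ?_⟩
  by_cases hv : v ∈ layerV X a b 0
  exacts [hold v hv, hout v hv]

lemma apply_apply_eq_of_mem_kerPi [Finite V] (hdeg : ∀ v : V, (X.neighborSet v).ncard ≤ 3)
    (hab : X.Adj a b) (hσ : σ ∈ kerPi X a b (k + 1)) (u : V) : σ (σ u) = u := by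
  by_contra h₂
  have h₁ : σ u ≠ u := fun h => h₂ (by rw [h, h])
  have h₁₂ : σ (σ u) ≠ σ u := fun h => h₁ (σ.injective h)
  obtain ⟨hu, hu'⟩ := mem_layerV_of_apply_ne hσ h₁
  obtain ⟨w, hw, huw⟩ := exists_adj_of_mem_layerV_succ hu hu'
  obtain ⟨w', hw', hww'⟩ := exists_adj_mem_layerV hab hw
  have hσu' : σ u ∉ layerV X a b k := (apply_mem_layerV_iff_of_mem_kerPi hσ).not.2 hu'
  have hσσu' : σ (σ u) ∉ layerV X a b k := (apply_mem_layerV_iff_of_mem_kerPi hσ).not.2 hσu'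
  have hσuw : X.Adj (σ u) w := (adj_apply_iff_of_mem_kerPi hσ u hw).2 huw
  have hσσuw : X.Adj (σ (σ u)) w := (adj_apply_iff_of_mem_kerPi hσ _ hw).2 hσuw
  -- `u`, `σ u`, `σ (σ u)` and `w'` are four distinct neighbours of `w`
  have := (Set.three_lt_ncard_iff (Set.toFinite _)).2 ⟨u, σ u, σ (σ u), w', huw.symm,
    hσuw.symm, hσσuw.symm, hww', h₁.symm, Ne.symm h₂, fun h => hu' (h ▸ hw'), h₁₂.symm,
    fun h => hσu' (h ▸ hw'), fun h => hσσu' (h ▸ hw')⟩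
  exact (hdeg w).not_gt this

section Twins

variable [DecidableEq V]

lemma twinTranspositions_zero : twinTranspositions X a b 0 = ∅ :=
  Set.eq_empty_of_forall_notMem fun _ ⟨_, _, hu, hu', _⟩ => hu' hu

lemma swap_mem_twinTranspositions (hσ : σ ∈ kerPi X a b (k + 1)) {u : V}
    (hu : σ u ≠ u) : swap u (σ u) ∈ twinTranspositions X a b (k + 1) := by
  obtain ⟨hnew, hold⟩ := mem_layerV_of_apply_ne hσ hu
  obtain ⟨hσnew, hσold⟩ := mem_layerV_of_apply_ne hσ (fun h => hu (σ.injective h))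
  refine ⟨u, σ u, hnew, hold, hσnew, hσold, hu.symm, ?_, rfl⟩
  ext w
  simp only [Nat.add_sub_cancel, Set.mem_ofPred_eq, and_congr_right_iff]
  exact fun hw => (adj_apply_iff_of_mem_kerPi hσ u hw).symm

lemma twinTranspositions_subset_kerPi :
    twinTranspositions X a b (k + 1) ⊆ kerPi X a b (k + 1) := by
  rintro _ ⟨u, v, hu, hu', hv, hv', -, htwin, rfl⟩
  simp only [Nat.add_sub_cancel] at hu' hv' htwin
  have hf : ∀ w ∈ layerV X a b k, (X.Adj u w ↔ X.Adj v w) := fun w hw => by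
    simpa only [Set.mem_ofPred_eq, hw, true_and] using Set.ext_iff.1 htwin w
  refine mem_kerPi_succ_iff.2 ⟨fun z hz => swap_apply_of_ne_of_ne ?_ ?_,
    fun z hz => swap_apply_of_ne_of_ne ?_ ?_, fun z w hw => ?_⟩
  · rintro rfl; exact hz hu
  · rintro rfl; exact hz hv
  · rintro rfl; exact hu' hz
  · rintro rfl; exact hv' hz
  · rcases eq_or_ne z u with rfl | hzu
    · rw [swap_apply_left, hf w hw]
    rcases eq_or_ne z v with rfl | hzv
    · rw [swap_apply_right, hf w hw]
    · rw [swap_apply_of_ne_of_ne hzu hzv]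

lemma mem_closure_twinTranspositions_of_mem_kerPi [Fintype V]
    (hdeg : ∀ v : V, (X.neighborSet v).ncard ≤ 3) (hab : X.Adj a b)
    (hσ : σ ∈ kerPi X a b (k + 1)) :
    σ ∈ Subgroup.closure (twinTranspositions X a b (k + 1)) := by
  rw [← σ.cycleFactorsFinset_noncommProd]
  refine Subgroup.noncommProd_mem _ _ fun c hc => ?_
  obtain ⟨hcyc, hcσ⟩ := mem_cycleFactorsFinset_iff.1 hc
  obtain ⟨u, hu⟩ := hcyc.nonempty_support
  have hcu : c u = σ u := hcσ u hu
  -- an involution's cycles are transpositions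
  have hccu : c (c u) = u := by
    rw [hcσ _ (apply_mem_support.2 hu), hcu, apply_apply_eq_of_mem_kerPi hdeg hab hσ]
  rw [hcyc.eq_swap_of_apply_apply_eq_self (mem_support.1 hu) hccu, hcu]
  exact Subgroup.subset_closure (swap_mem_twinTranspositions hσ (hcu ▸ mem_support.1 hu))

end Twins

end

theorem kernel_generated_by_twin_transpositions_general {V : Type*} [Fintype V] [DecidableEq V]
    (X : SimpleGraph V)
    (htriv : ∀ v : V, (X.neighborSet v).ncard ≤ 3)
    (a b : V) (hab : X.Adj a b) (r : ℕ) :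
    ((Subgroup.closure (twinTranspositions X a b r) : Subgroup (Equiv.Perm V)) :
        Set (Equiv.Perm V)) = kerPi X a b r ∧
      (∀ σ ∈ kerPi X a b r, σ * σ = 1) ∧
      (∀ σ ∈ kerPi X a b r, ∀ τ ∈ kerPi X a b r, σ * τ = τ * σ) := by
  rcases r with _ | k
  · simp [kerPi_zero, twinTranspositions_zero]
  have hsq : ∀ σ ∈ kerPi X a b (k + 1), σ * σ = 1 := fun σ hσ =>
    Equiv.ext (apply_apply_eq_of_mem_kerPi htriv hab hσ)
  refine ⟨?_, hsq, fun σ hσ τ hτ => ?_⟩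
  · refine subset_antisymm ?_ fun σ hσ =>
      mem_closure_twinTranspositions_of_mem_kerPi htriv hab hσ
    exact (Subgroup.closure_le (kerPiSubgroup X a b (k + 1))).2 twinTranspositions_subset_kerPi
  · have := Commute.of_orderOf_dvd_two (G := kerPiSubgroup X a b (k + 1))
      (fun g => orderOf_dvd_of_pow_eq_one (Subtype.ext (by simpa [sq] using hsq g g.2)))
      ⟨σ, hσ⟩ ⟨τ, hτ⟩
    exact congrArg Subtype.val this

/-- Let `X` be a connected trivalent graph with distinguished edge `e = (a, b)`.
The kernel of the restriction homomorphism `π_r : Aut_e(X_{r+1}) → Aut_e(X_r)` is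
generated by the transpositions `(u v)` over pairs of twin vertices `u, v ∈ V_{r+1}`;
in particular the kernel is an elementary abelian `2`-group. -/
theorem kernel_generated_by_twin_transpositions {V : Type*} [Fintype V] [DecidableEq V]
    (X : SimpleGraph V) (hconn : X.Connected)
    (htriv : ∀ v : V, (X.neighborSet v).ncard ≤ 3)
    (a b : V) (hab : X.Adj a b) (r : ℕ) (hr : 1 ≤ r) :
    ((Subgroup.closure (twinTranspositions X a b r) : Subgroup (Equiv.Perm V)) :
        Set (Equiv.Perm V)) = kerPi X a b r ∧
      (∀ σ ∈ kerPi X a b r, σ * σ = 1) ∧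
      (∀ σ ∈ kerPi X a b r, ∀ τ ∈ kerPi X a b r, σ * τ = τ * σ) :=
  kernel_generated_by_twin_transpositions_general X htriv a b hab r
end
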